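/- Let I be a set with a nontrivial ultrafilter U, and for each i ∈ I let E_i, F_i be n-dimensional normed spaces. Suppose u_i : E_i → F_i are isomorphisms with ‖u_i‖ ≤ 1 and lim_U ‖u_i⁻¹‖ = L < ∞. Then the induced map û between the Banach-space ultraproducts Ê = Π E_i / U and F̂ = Π F_i / U is an isomorphism with ‖û‖ ≤ 1 and ‖û⁻¹‖ ≤ L; hence d(Ê, F̂) ≤ lim_U d(E_i,F_i) for the Banach–Mazur distance d. -/

import Mathlib

open Filter
open scoped ENNReal

variable {I : Type*}

/-- The null subspace of `ℓ_∞{E_i}`: bounded families whose norms tend to `0` along `U`.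
The Banach-space ultraproduct `Π E_i / U` is the quotient of `lp E ∞` by this subspace. -/
noncomputable def ultraNull (U : Ultrafilter I) (E : I → Type*)
    [∀ i, NormedAddCommGroup (E i)] [∀ i, NormedSpace ℝ (E i)] :
    Submodule ℝ (lp E ∞) where
  carrier := {x | Tendsto (fun i => ‖x i‖) (U : Filter I) (nhds 0)}
  zero_mem' := by
    simp only [Set.mem_setOf_eq, lp.coeFn_zero, Pi.zero_apply, norm_zero]
    exact tendsto_const_nhds
  add_mem' := by
    intro a b ha hb
    have h := ha.add hb
    rw [add_zero] at h
    refine squeeze_zero (fun i => norm_nonneg _) (fun i => ?_) h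
    rw [lp.coeFn_add, Pi.add_apply]
    exact norm_add_le _ _
  smul_mem' := by
    intro c x hx
    have h : Tendsto (fun i => ‖c‖ * ‖x i‖) (U : Filter I) (nhds (‖c‖ * 0)) :=
      tendsto_const_nhds.mul hx
    rw [mul_zero] at h
    exact h.congr fun i => by rw [lp.coeFn_smul, Pi.smul_apply, norm_smul]

theorem ultra_lim_exists (U : Ultrafilter I) {r : I → ℝ} {C : ℝ}
    (h : ∀ i, r i ∈ Set.Icc (-C) C) :
    ∃ a, Tendsto r (U : Filter I) (nhds a) := by
  obtain ⟨a, -, ha⟩ := (isCompact_Icc (a := -C) (b := C)).ultrafilter_le_nhds (U.map r)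
    (by
      rw [Ultrafilter.coe_map, le_principal_iff, mem_map]
      exact Filter.univ_mem' h)
  exact ⟨a, by rwa [Filter.Tendsto, ← Ultrafilter.coe_map]⟩

theorem lp_lim_exists (U : Ultrafilter I) {E : I → Type*} [∀ i, NormedAddCommGroup (E i)]
    (x : lp E ∞) : ∃ a, 0 ≤ a ∧ Tendsto (fun i => ‖x i‖) (U : Filter I) (nhds a) := by
  obtain ⟨a, ha⟩ := ultra_lim_exists U (r := fun i => ‖x i‖) (C := ‖x‖)
    (fun i => ⟨(neg_nonpos.mpr (norm_nonneg x)).trans (norm_nonneg _),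
      lp.norm_apply_le_norm ENNReal.top_ne_zero x i⟩)
  exact ⟨a, ge_of_tendsto' ha fun i => norm_nonneg _, ha⟩

theorem ultra_quot_norm_eq (U : Ultrafilter I) (E : I → Type*) [∀ i, NormedAddCommGroup (E i)]
    [∀ i, NormedSpace ℝ (E i)] (x : lp E ∞) {a : ℝ}
    (ha : Tendsto (fun i => ‖x i‖) (U : Filter I) (nhds a)) :
    ‖(Submodule.Quotient.mk x : (lp E ∞) ⧸ ultraNull U E)‖ = a := by
  have ha0 : 0 ≤ a := ge_of_tendsto' ha fun i => norm_nonneg _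
  refine le_antisymm (le_of_forall_pos_le_add fun ε hε => ?_)
    (le_of_forall_pos_le_add fun ε hε => ?_)
  · -- ‖mk x‖ ≤ a + ε
    set y : lp E ∞ := ⟨fun i => if ‖x i‖ ≤ a + ε then x i else 0, memℓp_infty (by
      refine ⟨a + ε, ?_⟩
      rintro - ⟨i, rfl⟩
      dsimp only
      split_ifs with h
      · exact h
      · simpa using by positivity)⟩ with hy
    have hyc : ∀ i, y i = if ‖x i‖ ≤ a + ε then x i else 0 := fun i => rfl
    have hs : {i | ‖x i‖ ≤ a + ε} ∈ (U : Filter I) := ha (Iic_mem_nhds (by linarith))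
    have hmk : (Submodule.Quotient.mk x : (lp E ∞) ⧸ ultraNull U E) =
        Submodule.Quotient.mk y := by
      rw [Submodule.Quotient.eq]
      refine tendsto_const_nhds.congr' ?_
      filter_upwards [hs] with i hi
      rw [lp.coeFn_sub, Pi.sub_apply, hyc i, if_pos hi, sub_self, norm_zero]
    rw [hmk]
    refine (Submodule.Quotient.norm_mk_le _ _).trans ?_
    refine lp.norm_le_of_forall_le (by positivity) fun i => ?_
    rw [hyc i]
    split_ifs with h
    · exact h
    · simpa using by positivity
  · -- a ≤ ‖mk x‖ + ε
    obtain ⟨m, hm, hmlt⟩ :=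
      Submodule.Quotient.norm_mk_lt (Submodule.Quotient.mk x : (lp E ∞) ⧸ ultraNull U E) hε
    have hnull : m - x ∈ ultraNull U E := (Submodule.Quotient.eq _).mp hm
    have hten : Tendsto (fun i => ‖m‖ + ‖(m - x) i‖) (U : Filter I) (nhds (‖m‖ + 0)) :=
      tendsto_const_nhds.add hnull
    have hle : a ≤ ‖m‖ + 0 := by
      refine le_of_tendsto_of_tendsto' ha hten fun i => ?_
      have h1 : ‖x i‖ ≤ ‖m i‖ + ‖(m - x) i‖ := by
        rw [lp.coeFn_sub, Pi.sub_apply]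
        have := norm_sub_norm_le (m i) (x i)
        linarith [abs_le.mp (abs_norm_sub_norm_le (m i) (x i))]
      exact h1.trans (by gcongr; exact lp.norm_apply_le_norm ENNReal.top_ne_zero m i)
    rw [add_zero] at hle
    linarith

theorem exists_ultra_quot_map (U : Ultrafilter I) (E F : I → Type*)
    [∀ i, NormedAddCommGroup (E i)] [∀ i, NormedSpace ℝ (E i)]
    [∀ i, NormedAddCommGroup (F i)] [∀ i, NormedSpace ℝ (F i)]
    (w : ∀ i, E i →L[ℝ] F i) (C : ℝ) (hC : 0 ≤ C) (hw : ∀ i, ‖w i‖ ≤ C) :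
    ∃ W : ((lp E ∞) ⧸ ultraNull U E) →L[ℝ] ((lp F ∞) ⧸ ultraNull U F),
      (∀ (x : lp E ∞) (y : lp F ∞), (∀ i, y i = w i (x i)) →
        W (Submodule.Quotient.mk x) = Submodule.Quotient.mk y) ∧
      ∀ M : ℝ, 0 ≤ M → (∀ ε > 0, ∀ᶠ i in (U : Filter I), ‖w i‖ ≤ M + ε) →
        ∀ z, ‖W z‖ ≤ M * ‖z‖ := by
  have memT : ∀ x : lp E ∞, Memℓp (fun i => w i (x i)) ∞ := by
    intro x
    refine memℓp_infty ⟨C * ‖x‖, ?_⟩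
    rintro - ⟨i, rfl⟩
    exact ((w i).le_opNorm _).trans (mul_le_mul (hw i)
      (lp.norm_apply_le_norm ENNReal.top_ne_zero x i) (norm_nonneg _) hC)
  set T : lp E ∞ →ₗ[ℝ] lp F ∞ :=
    { toFun := fun x => ⟨fun i => w i (x i), memT x⟩
      map_add' := by
        intro x y
        apply lp.ext
        funext i
        simp [lp.coeFn_add, Pi.add_apply]; rfl
      map_smul' := by
        intro c x
        apply lp.ext
        funext i
        simp [lp.coeFn_smul, Pi.smul_apply] } with hT
  have hTc : ∀ (x : lp E ∞) (i : I), (T x) i = w i (x i) := fun x i => rfl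
  -- the key norm estimate
  have key : ∀ M : ℝ, 0 ≤ M → (∀ ε > 0, ∀ᶠ i in (U : Filter I), ‖w i‖ ≤ M + ε) →
      ∀ x : lp E ∞, ‖(Submodule.Quotient.mk (T x) : (lp F ∞) ⧸ ultraNull U F)‖ ≤
        M * ‖(Submodule.Quotient.mk x : (lp E ∞) ⧸ ultraNull U E)‖ := by
    intro M hM hMev x
    obtain ⟨b, hb0, hb⟩ := lp_lim_exists U x
    obtain ⟨c, hc0, hc⟩ := lp_lim_exists U (T x)
    rw [ultra_quot_norm_eq U E x hb, ultra_quot_norm_eq U F (T x) hc]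
    have hcb : ∀ ε > 0, c ≤ (M + ε) * b := by
      intro ε hε
      refine le_of_tendsto_of_tendsto hc (tendsto_const_nhds.mul hb) ?_
      filter_upwards [hMev ε hε] with i hi
      rw [hTc x i]
      exact ((w i).le_opNorm _).trans
        (mul_le_mul hi le_rfl (norm_nonneg _) (by linarith))
    refine le_of_forall_pos_le_add fun δ hδ => ?_
    have h1 := hcb (δ / (b + 1)) (by positivity)
    have h2 : (M + δ / (b + 1)) * b ≤ M * b + δ := by
      rw [add_mul]
      have : δ / (b + 1) * b ≤ δ := by
        rw [div_mul_eq_mul_div, div_le_iff₀ (by linarith)]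
        nlinarith
      linarith
    linarith
  have hker : ultraNull U E ≤ LinearMap.ker ((ultraNull U F).mkQ.comp T) := by
    intro x hx
    simp only [LinearMap.mem_ker, LinearMap.comp_apply, Submodule.mkQ_apply,
      Submodule.Quotient.mk_eq_zero]
    change Tendsto (fun i => ‖(T x) i‖) (U : Filter I) (nhds 0)
    refine squeeze_zero (fun i => norm_nonneg _) (fun i => ?_)
      (by simpa using tendsto_const_nhds.mul (hx : Tendsto (fun i => ‖x i‖) _ (nhds 0))
        : Tendsto (fun i => C * ‖x i‖) (U : Filter I) (nhds 0))
    rw [hTc x i]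
    exact ((w i).le_opNorm _).trans (mul_le_mul_of_nonneg_right (hw i) (norm_nonneg _))
  set Wlin := Submodule.liftQ (ultraNull U E) ((ultraNull U F).mkQ.comp T) hker with hWlin
  have hWmk : ∀ x : lp E ∞, Wlin (Submodule.Quotient.mk x) = Submodule.Quotient.mk (T x) :=
    fun x => rfl
  have hCev : ∀ ε > 0, ∀ᶠ i in (U : Filter I), ‖w i‖ ≤ C + ε := by
    intro ε hε
    exact Filter.Eventually.of_forall fun i => (hw i).trans (by linarith)
  refine ⟨Wlin.mkContinuous C fun z => ?_, ?_, ?_⟩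
  · obtain ⟨x, rfl⟩ := Submodule.Quotient.mk_surjective _ z
    rw [hWmk]
    exact key C hC hCev x
  · intro x y hxy
    have : y = T x := lp.ext (funext fun i => by rw [hxy i, hTc])
    rw [this]
    exact hWmk x
  · intro M hM hMev z
    obtain ⟨x, rfl⟩ := Submodule.Quotient.mk_surjective _ z
    rw [LinearMap.mkContinuous_apply, hWmk]
    exact key M hM hMev x

/-- Proposition 11 (i), Banach-space version: if `u_i : E_i → F_i` are isomorphisms of
`n`-dimensional normed spaces with `‖u_i‖ ≤ 1` and `lim_U ‖u_i⁻¹‖ = L`, then the induced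
map `û` between the ultraproducts `Ê = Π E_i / U` and `F̂ = Π F_i / U` is an isomorphism
with `‖û‖ ≤ 1` and `‖û⁻¹‖ ≤ L`; hence `d(Ê,F̂) ≤ lim_U d(E_i,F_i)`. -/
theorem stmt_9 (n : ℕ) (U : Ultrafilter I) (E F : I → Type*)
    [∀ i, NormedAddCommGroup (E i)] [∀ i, NormedSpace ℝ (E i)]
    [∀ i, NormedAddCommGroup (F i)] [∀ i, NormedSpace ℝ (F i)]
    [∀ i, FiniteDimensional ℝ (E i)] [∀ i, FiniteDimensional ℝ (F i)]
    (hE : ∀ i, Module.finrank ℝ (E i) = n) (hF : ∀ i, Module.finrank ℝ (F i) = n)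
    (u : ∀ i, E i ≃L[ℝ] F i)
    (hu : ∀ i, ‖((u i : E i →L[ℝ] F i))‖ ≤ 1)
    (L : ℝ)
    (hL : Tendsto (fun i => ‖(((u i).symm : F i →L[ℝ] E i))‖) (U : Filter I) (nhds L)) :
    ∃ v : ((lp E ∞) ⧸ (ultraNull U E)) ≃L[ℝ] ((lp F ∞) ⧸ (ultraNull U F)),
      (∀ (x : lp E ∞) (y : lp F ∞), (∀ i, y i = u i (x i)) →
        v (Submodule.Quotient.mk x) = Submodule.Quotient.mk y) ∧
      ‖(v : ((lp E ∞) ⧸ (ultraNull U E)) →L[ℝ] ((lp F ∞) ⧸ (ultraNull U F)))‖ ≤ 1 ∧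
      ‖(v.symm : ((lp F ∞) ⧸ (ultraNull U F)) →L[ℝ] ((lp E ∞) ⧸ (ultraNull U E)))‖ ≤ L := by
  have hL0 : 0 ≤ L := ge_of_tendsto' hL fun i => norm_nonneg _
  -- forward map
  obtain ⟨W₁, spec₁, bnd₁⟩ := exists_ultra_quot_map U E F (fun i => (u i : E i →L[ℝ] F i))
    1 zero_le_one hu
  -- truncated backward family
  set w' : ∀ i, F i →L[ℝ] E i := fun i =>
    if ‖((u i).symm : F i →L[ℝ] E i)‖ ≤ L + 1 then ((u i).symm : F i →L[ℝ] E i) else 0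
    with hw'
  have hw'le : ∀ i, ‖w' i‖ ≤ L + 1 := by
    intro i
    rw [hw']
    dsimp only
    split_ifs with h
    · exact h
    · simp [norm_zero]; linarith
  have hS : {i | ‖((u i).symm : F i →L[ℝ] E i)‖ ≤ L + 1} ∈ (U : Filter I) :=
    hL (Iic_mem_nhds (by linarith))
  have hw'ev : ∀ ε > 0, ∀ᶠ i in (U : Filter I), ‖w' i‖ ≤ L + ε := by
    intro ε hε
    have h1 : {i | ‖((u i).symm : F i →L[ℝ] E i)‖ ≤ L + min ε 1} ∈ (U : Filter I) :=
      hL (Iic_mem_nhds (by simp only [lt_add_iff_pos_right]; positivity))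
    filter_upwards [h1] with i hi
    have hle1 : ‖((u i).symm : F i →L[ℝ] E i)‖ ≤ L + 1 :=
      hi.trans (by simp [min_le_right])
    rw [hw']
    dsimp only
    rw [if_pos hle1]
    exact hi.trans (by simp [min_le_left])
  obtain ⟨W₂, spec₂, bnd₂⟩ := exists_ultra_quot_map U F E w' (L + 1) (by linarith) hw'le
  -- lp-level images
  have memyF : ∀ x : lp E ∞, Memℓp (fun i => u i (x i)) ∞ := by
    intro x
    refine memℓp_infty ⟨‖x‖, ?_⟩
    rintro - ⟨i, rfl⟩
    exact (((u i : E i →L[ℝ] F i)).le_opNorm _).trans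
      (by nlinarith [hu i, lp.norm_apply_le_norm ENNReal.top_ne_zero x i,
        norm_nonneg (x i), norm_nonneg x])
  have memxE : ∀ y : lp F ∞, Memℓp (fun i => w' i (y i)) ∞ := by
    intro y
    refine memℓp_infty ⟨(L + 1) * ‖y‖, ?_⟩
    rintro - ⟨i, rfl⟩
    exact ((w' i).le_opNorm _).trans (mul_le_mul (hw'le i)
      (lp.norm_apply_le_norm ENNReal.top_ne_zero y i) (norm_nonneg _) (by linarith))
  -- left inverse
  have left : ∀ z, W₂ (W₁ z) = z := by
    intro z
    obtain ⟨x, rfl⟩ := Submodule.Quotient.mk_surjective _ z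
    set y : lp F ∞ := ⟨fun i => u i (x i), memyF x⟩ with hy
    rw [spec₁ x y fun i => rfl]
    set x' : lp E ∞ := ⟨fun i => w' i (y i), memxE y⟩ with hx'
    rw [spec₂ y x' fun i => rfl]
    rw [Submodule.Quotient.eq]
    refine tendsto_const_nhds.congr' ?_
    filter_upwards [hS] with i hi
    have : x' i = x i := by
      show w' i (y i) = x i
      rw [hw']
      dsimp only
      rw [if_pos hi]
      show (u i).symm (u i (x i)) = x i
      exact (u i).symm_apply_apply _
    rw [lp.coeFn_sub, Pi.sub_apply, this, sub_self, norm_zero]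
  -- right inverse
  have right : ∀ z, W₁ (W₂ z) = z := by
    intro z
    obtain ⟨y, rfl⟩ := Submodule.Quotient.mk_surjective _ z
    set x' : lp E ∞ := ⟨fun i => w' i (y i), memxE y⟩ with hx'
    rw [spec₂ y x' fun i => rfl]
    set y' : lp F ∞ := ⟨fun i => u i (x' i), memyF x'⟩ with hy'
    rw [spec₁ x' y' fun i => rfl]
    rw [Submodule.Quotient.eq]
    refine tendsto_const_nhds.congr' ?_
    filter_upwards [hS] with i hi
    have : y' i = y i := by
      show u i (w' i (y i)) = y i
      rw [hw']
      dsimp only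
      rw [if_pos hi]
      show u i ((u i).symm (y i)) = y i
      exact (u i).apply_symm_apply _
    rw [lp.coeFn_sub, Pi.sub_apply, this, sub_self, norm_zero]
  refine ⟨ContinuousLinearEquiv.equivOfInverse W₁ W₂ left right, ?_, ?_, ?_⟩
  · intro x y hxy
    rw [ContinuousLinearEquiv.equivOfInverse_apply]
    exact spec₁ x y hxy
  · refine ContinuousLinearMap.opNorm_le_bound _ zero_le_one fun z => ?_
    rw [ContinuousLinearEquiv.coe_coe, ContinuousLinearEquiv.equivOfInverse_apply]
    simpa using bnd₁ 1 zero_le_one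
      (fun ε hε => Filter.Eventually.of_forall fun i => (hu i).trans (by linarith)) z
  · refine ContinuousLinearMap.opNorm_le_bound _ hL0 fun z => ?_
    rw [ContinuousLinearEquiv.coe_coe, ContinuousLinearEquiv.symm_equivOfInverse,
      ContinuousLinearEquiv.equivOfInverse_apply]
    exact bnd₂ L hL0 hw'ev z
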